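/- arXiv:1601.03147 — 2 statements merged into one kernel-verified Lean document; each statement's English description precedes it below -/
import Mathlib

section
/- Let ρ ∈ (0,1), α ≥ 1, N ≥ 1, and let φ = (√((α-1)² + 4αN) + α - 1)/2. If nonnegative reals satisfy ρC⁽¹⁾ + (1-ρ)L⁽¹⁾ ≤ (1-ρ)(φ+1)L* and ρC⁽²⁾ + (1-ρ)L⁽²⁾ ≤ αρ(N/φ + 1)C*, with ρC* + (1-ρ)L* > 0, then the ratio (ρ(C⁽¹⁾+C⁽²⁾) + (1-ρ)(L⁽¹⁾+L⁽²⁾))/(ρC* + (1-ρ)L*) ≤ φ + 1 = (√((α-1)² + 4αN) + α + 1)/2. -/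
/-! The key identity is `α (N/φ + 1) = φ + 1`: `φ` is the positive root of `x² = (α - 1) x + α N`,
so `α N + α φ = φ² + φ`. The second hypothesis then reads `ρ C⁽²⁾ + (1 - ρ) L⁽²⁾ ≤ (φ + 1) ρ C*`,
and adding it to the first bounds the numerator by `(φ + 1) (ρ C* + (1 - ρ) L*)`. -/

theorem sq_eq_mul_add_of_eq_sqrt_discrim {b c x : ℝ} (hd : 0 ≤ b ^ 2 + 4 * c)
    (hx : x = (√(b ^ 2 + 4 * c) + b) / 2) : x ^ 2 = b * x + c := by
  have hsq := Real.sq_sqrt hd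
  rw [hx]
  linear_combination hsq / 4

theorem pos_of_eq_sqrt_discrim {b c x : ℝ} (hc : 0 < c)
    (hx : x = (√(b ^ 2 + 4 * c) + b) / 2) : 0 < x := by
  have hlt : |b| < √(b ^ 2 + 4 * c) := by
    rw [← Real.sqrt_sq_eq_abs]
    exact Real.sqrt_lt_sqrt (sq_nonneg b) (by linarith)
  rw [hx]
  linarith [neg_abs_le b]

theorem mul_div_add_one_eq_add_one_of_sq_eq {α N φ : ℝ} (hφ : φ ≠ 0)
    (h : φ ^ 2 = (α - 1) * φ + α * N) : α * (N / φ + 1) = φ + 1 := by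
  field_simp
  linear_combination -h

theorem full_intercomm_ratio_general (ρ α N Cs Ls C1 L1 C2 L2 φ : ℝ)
    (hα : 1 ≤ α) (hN : 1 ≤ N)
    (hpos : 0 < ρ * Cs + (1 - ρ) * Ls)
    (hφ : φ = (Real.sqrt ((α - 1)^2 + 4*α*N) + α - 1) / 2)
    (h1 : ρ * C1 + (1 - ρ) * L1 ≤ (1 - ρ) * (φ + 1) * Ls)
    (h2 : ρ * C2 + (1 - ρ) * L2 ≤ α * ρ * (N / φ + 1) * Cs) :
    (ρ * (C1 + C2) + (1 - ρ) * (L1 + L2)) / (ρ * Cs + (1 - ρ) * Ls) ≤ φ + 1 ∧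
      φ + 1 = (Real.sqrt ((α - 1)^2 + 4*α*N) + α + 1) / 2 := by
  have hαN : 0 < α * N := by positivity
  have hφ' : φ = (√((α - 1) ^ 2 + 4 * (α * N)) + (α - 1)) / 2 := by
    rw [hφ, mul_assoc]; ring
  have hroot := sq_eq_mul_add_of_eq_sqrt_discrim (by positivity) hφ'
  have hkey := mul_div_add_one_eq_add_one_of_sq_eq (pos_of_eq_sqrt_discrim hαN hφ').ne' hroot
  have h2' : ρ * C2 + (1 - ρ) * L2 ≤ (φ + 1) * ρ * Cs := by
    rwa [mul_right_comm α ρ, hkey] at h2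
  refine ⟨?_, by rw [hφ]; ring⟩
  rw [div_le_iff₀ hpos]
  linear_combination h1 + h2'

theorem full_intercomm_ratio (ρ α N Cs Ls C1 L1 C2 L2 φ : ℝ)
    (hρ0 : 0 < ρ) (hρ1 : ρ < 1) (hα : 1 ≤ α) (hN : 1 ≤ N)
    (hCs : 0 ≤ Cs) (hLs : 0 ≤ Ls) (hC1 : 0 ≤ C1) (hL1 : 0 ≤ L1)
    (hC2 : 0 ≤ C2) (hL2 : 0 ≤ L2)
    (hpos : 0 < ρ * Cs + (1 - ρ) * Ls)
    (hφ : φ = (Real.sqrt ((α - 1)^2 + 4*α*N) + α - 1) / 2)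
    (h1 : ρ * C1 + (1 - ρ) * L1 ≤ (1 - ρ) * (φ + 1) * Ls)
    (h2 : ρ * C2 + (1 - ρ) * L2 ≤ α * ρ * (N / φ + 1) * Cs) :
    (ρ * (C1 + C2) + (1 - ρ) * (L1 + L2)) / (ρ * Cs + (1 - ρ) * Ls) ≤ φ + 1 ∧
      φ + 1 = (Real.sqrt ((α - 1)^2 + 4*α*N) + α + 1) / 2 :=
  full_intercomm_ratio_general ρ α N Cs Ls C1 L1 C2 L2 φ hα hN hpos hφ h1 h2
end

section
/- The competitive ratio of the K-report threshold algorithm with full intercommunication is decreasing in K: for fixed α ≥ 1 and N ≥ 1, if 1 ≤ K₁ ≤ K₂ ≤ N then (√((α-K₂)² + 4αK₂N) + α + K₂)/(2K₂) ≤ (√((α-K₁)² + 4αK₁N) + α + K₁)/(2K₁). -/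
theorem ratio_decreasing_in_K (α N K₁ K₂ : ℝ) (hα : 1 ≤ α)
    (hK₁ : 1 ≤ K₁) (hK : K₁ ≤ K₂) (hK₂ : K₂ ≤ N) :
    (Real.sqrt ((α - K₂)^2 + 4*α*K₂*N) + α + K₂) / (2*K₂)
      ≤ (Real.sqrt ((α - K₁)^2 + 4*α*K₁*N) + α + K₁) / (2*K₁) := by
  have hN : (1:ℝ) ≤ N := le_trans (le_trans hK₁ hK) hK₂
  have hα0 : (0:ℝ) < α := lt_of_lt_of_le one_pos hα
  have h01 : (0:ℝ) < K₁ := lt_of_lt_of_le one_pos hK₁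
  have h02 : (0:ℝ) < K₂ := lt_of_lt_of_le h01 hK
  have hN0 : (0:ℝ) < N := lt_of_lt_of_le one_pos hN
  have h1 : 0 ≤ (α - K₁)^2 + 4*α*K₁*N := by
    nlinarith [sq_nonneg (α - K₁), mul_pos (mul_pos hα0 h01) hN0]
  have h2 : 0 ≤ (α - K₂)^2 + 4*α*K₂*N := by
    nlinarith [sq_nonneg (α - K₂), mul_pos (mul_pos hα0 h02) hN0]
  have hs1 := Real.sq_sqrt h1
  have hs2 := Real.sq_sqrt h2
  have hn1 := Real.sqrt_nonneg ((α - K₁)^2 + 4*α*K₁*N)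
  have hn2 := Real.sqrt_nonneg ((α - K₂)^2 + 4*α*K₂*N)
  have key : K₁ * Real.sqrt ((α - K₂)^2 + 4*α*K₂*N)
      ≤ K₂ * Real.sqrt ((α - K₁)^2 + 4*α*K₁*N) := by
    have hfac : 0 ≤ α * (K₂ - K₁) * (α*(K₁+K₂) + 2*K₁*K₂*(2*N-1)) := by
      apply mul_nonneg
      · apply mul_nonneg hα0.le; linarith
      · nlinarith [mul_pos h01 h02, mul_pos hα0 (add_pos h01 h02)]
    have hsq : (K₁ * Real.sqrt ((α - K₂)^2 + 4*α*K₂*N))^2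
        ≤ (K₂ * Real.sqrt ((α - K₁)^2 + 4*α*K₁*N))^2 := by
      rw [mul_pow, mul_pow, hs1, hs2]
      nlinarith [hfac]
    have h := Real.sqrt_le_sqrt hsq
    rwa [Real.sqrt_sq (mul_nonneg h01.le hn2), Real.sqrt_sq (mul_nonneg h02.le hn1)] at h
  have hp1 : (0:ℝ) < 2*K₁ := by linarith
  have hp2 : (0:ℝ) < 2*K₂ := by linarith
  rw [div_le_div_iff₀ hp2 hp1]
  nlinarith [key]
end
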